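/- arXiv:1511.08061 — 3 statements merged into one kernel-verified Lean document; each statement's English description precedes it below -/
import Mathlib

section
/- ℚ_n(L₀,...,L_{n-1}) is order isomorphic to ℚ_n(L₀,...,L_{n-1}) ^ ℚ_n(L₀,...,L_{n-1}), i.e. the shuffle concatenated with itself is isomorphic to the shuffle. -/
/-!
By a back-and-forth argument, any two copies of `ℚ_n` are isomorphic through an order isomorphism
that preserves colours. The concatenation `ℚ_n ^ ℚ_n`, coloured by the colouring on each summand, is
again a copy of `ℚ_n`, so the shuffle over `ℚ_n` is isomorphic to the shuffle over `ℚ_n ^ ℚ_n`, and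
a shuffle over a concatenation of bases is the concatenation of the two shuffles.
-/

/-- `Q` together with the colouring `c : Q → Fin n` is a copy of the `n`-coloured
rationals `ℚ_n`: a countable nonempty dense linear order without endpoints in which
each of the `n` colours occurs interdensely. -/
def IsQn (n : ℕ) (Q : Type*) [LinearOrder Q] (c : Q → Fin n) : Prop :=
  Countable Q ∧ Nonempty Q ∧ DenselyOrdered Q ∧ NoMinOrder Q ∧ NoMaxOrder Q ∧
    ∀ x y : Q, x < y → ∀ i : Fin n, ∃ z : Q, x < z ∧ z < y ∧ c z = i

noncomputable section

variable {n : ℕ} {α β γ : Type*} [LinearOrder α] [LinearOrder β]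

def IsInterdense (c : α → γ) : Prop :=
  ∀ x y : α, x < y → ∀ i, ∃ z, x < z ∧ z < y ∧ c z = i

theorem IsInterdense.exists_between_finsets [DenselyOrdered α] [NoMinOrder α] [NoMaxOrder α]
    [Nonempty α] {c : α → γ} (hc : IsInterdense c) (lo hi : Finset α)
    (lo_lt_hi : ∀ x ∈ lo, ∀ y ∈ hi, x < y) (i : γ) :
    ∃ m, (∀ x ∈ lo, x < m) ∧ (∀ y ∈ hi, m < y) ∧ c m = i := by
  obtain ⟨m₀, lo_lt_m₀, m₀_lt_hi⟩ := Order.exists_between_finsets lo hi lo_lt_hi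
  obtain ⟨m₁, m₀_lt_m₁, m₁_lt_hi⟩ :=
    Order.exists_between_finsets {m₀} hi (by simpa using m₀_lt_hi)
  obtain ⟨m, hm₀, hm₁, rfl⟩ := hc m₀ m₁ (m₀_lt_m₁ m₀ (Finset.mem_singleton_self m₀)) i
  exact ⟨m, fun x hx => (lo_lt_m₀ x hx).trans hm₀, fun y hy => hm₁.trans (m₁_lt_hi y hy), rfl⟩

variable (cα : α → γ) (cβ : β → γ)

def ColouredPartialIso : Type _ :=
  { f : Order.PartialIso α β // ∀ p ∈ f.val, cβ p.2 = cα p.1 }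

namespace ColouredPartialIso

instance : Preorder (ColouredPartialIso cα cβ) := Subtype.preorder _

instance : Inhabited (ColouredPartialIso cα cβ) := ⟨⟨default, by simp [default]⟩⟩

variable {cα cβ}

protected def comm (f : ColouredPartialIso cα cβ) : ColouredPartialIso cβ cα :=
  ⟨f.val.comm, by
    rintro _ hp
    obtain ⟨⟨a, b⟩, hab, rfl⟩ := Finset.mem_image.1 hp
    exact (f.prop _ hab).symm⟩

theorem mem_comm {f : ColouredPartialIso cα cβ} {a : α} {b : β} (h : (a, b) ∈ f.val.val) :
    (b, a) ∈ f.comm.val.val :=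
  Finset.mem_image_of_mem _ h

theorem exists_across [DenselyOrdered β] [NoMinOrder β] [NoMaxOrder β] [Nonempty β]
    (hcβ : IsInterdense cβ) (f : ColouredPartialIso cα cβ) (a : α)
    (ha : ∀ b, (a, b) ∉ f.val.val) :
    ∃ b, cβ b = cα a ∧ ∀ p ∈ f.val.val, cmp p.1 a = cmp p.2 b := by
  let below := {p ∈ f.val.val | p.1 < a}.image Prod.snd
  let above := {p ∈ f.val.val | a < p.1}.image Prod.snd
  have below_lt_above : ∀ x ∈ below, ∀ y ∈ above, x < y := by
    simp only [below, above, Finset.mem_image, Finset.mem_filter]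
    rintro _ ⟨p, ⟨hp, hpa⟩, rfl⟩ _ ⟨q, ⟨hq, haq⟩, rfl⟩
    exact (lt_iff_lt_of_cmp_eq_cmp (f.val.prop p hp q hq)).1 (hpa.trans haq)
  obtain ⟨b, below_lt_b, b_lt_above, hb⟩ :=
    hcβ.exists_between_finsets below above below_lt_above (cα a)
  refine ⟨b, hb, fun p hp => ?_⟩
  rcases lt_or_gt_of_ne (fun h : p.1 = a => ha p.2 (h ▸ hp)) with hpa | hap
  · have hpb : p.2 < b := below_lt_b _ (Finset.mem_image_of_mem _ (Finset.mem_filter.2 ⟨hp, hpa⟩))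
    rw [(cmp_eq_lt_iff _ _).2 hpa, (cmp_eq_lt_iff _ _).2 hpb]
  · have hbp : b < p.2 := b_lt_above _ (Finset.mem_image_of_mem _ (Finset.mem_filter.2 ⟨hp, hap⟩))
    rw [(cmp_eq_gt_iff _ _).2 hap, (cmp_eq_gt_iff _ _).2 hbp]

variable (cα) in
def definedAtLeft [DenselyOrdered β] [NoMinOrder β] [NoMaxOrder β] [Nonempty β]
    (hcβ : IsInterdense cβ) (a : α) : Order.Cofinal (ColouredPartialIso cα cβ) where
  carrier := {f | ∃ b, (a, b) ∈ f.val.val}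
  isCofinal f := by
    by_cases ha : ∃ b, (a, b) ∈ f.val.val
    · exact ⟨f, ha, le_rfl⟩
    obtain ⟨b, hb, hab⟩ := exists_across hcβ f a (not_exists.1 ha)
    refine ⟨⟨⟨insert (a, b) f.val.val, ?_⟩, ?_⟩, ⟨b, Finset.mem_insert_self _ _⟩,
      Finset.subset_insert _ _⟩
    · simp only [Finset.mem_insert]
      rintro p (rfl | hp) q (rfl | hq)
      · rw [cmp_self_eq_eq, cmp_self_eq_eq]
      · rw [cmp_eq_cmp_symm]; exact hab q hq
      · exact hab p hp
      · exact f.val.prop p hp q hq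
    · simp only [Finset.mem_insert]
      rintro p (rfl | hp)
      exacts [hb, f.prop p hp]

variable (cβ) in
def definedAtRight [DenselyOrdered α] [NoMinOrder α] [NoMaxOrder α] [Nonempty α]
    (hcα : IsInterdense cα) (b : β) : Order.Cofinal (ColouredPartialIso cα cβ) where
  carrier := {f | ∃ a, (a, b) ∈ f.val.val}
  isCofinal f := by
    obtain ⟨g, ⟨a, ha⟩, hfg⟩ := (definedAtLeft cβ hcα b).isCofinal f.comm
    refine ⟨g.comm, ⟨a, mem_comm ha⟩, ?_⟩
    rintro ⟨x, y⟩ hxy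
    exact mem_comm (hfg (mem_comm hxy))

end ColouredPartialIso

open ColouredPartialIso in
theorem exists_orderIso_of_isInterdense [Countable α] [DenselyOrdered α] [NoMinOrder α]
    [NoMaxOrder α] [Nonempty α] [Countable β] [DenselyOrdered β] [NoMinOrder β] [NoMaxOrder β]
    [Nonempty β] (hcα : IsInterdense cα) (hcβ : IsInterdense cβ) :
    ∃ e : α ≃o β, ∀ a, cβ (e a) = cα a := by
  cases nonempty_encodable α
  cases nonempty_encodable β
  let D : α ⊕ β → Order.Cofinal (ColouredPartialIso cα cβ) :=
    Sum.elim (definedAtLeft cα hcβ) (definedAtRight cβ hcα)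
  let I := Order.idealOfCofinals default D
  have image_mem (a : α) : ∃ b, ∃ f ∈ I, (a, b) ∈ f.val.val := by
    obtain ⟨f, ⟨b, hab⟩, hf⟩ := Order.cofinal_meets_idealOfCofinals default D (Sum.inl a)
    exact ⟨b, f, hf, hab⟩
  have preimage_mem (b : β) : ∃ a, ∃ f ∈ I, (a, b) ∈ f.val.val := by
    obtain ⟨f, ⟨a, hab⟩, hf⟩ := Order.cofinal_meets_idealOfCofinals default D (Sum.inr b)
    exact ⟨a, f, hf, hab⟩
  choose F hF using image_mem
  choose G hG using preimage_mem
  refine ⟨OrderIso.ofCmpEqCmp F G fun a b => ?_, fun a => ?_⟩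
  · obtain ⟨f, hf, haF⟩ := hF a
    obtain ⟨g, hg, hGb⟩ := hG b
    obtain ⟨h, -, hfh, hgh⟩ := I.directed f hf g hg
    exact h.val.prop _ (hfh haF) _ (hgh hGb)
  · obtain ⟨f, -, haF⟩ := hF a
    exact f.prop _ haF

theorem IsInterdense.sumLex [NoMaxOrder α] {cα : α → γ} {cβ : β → γ}
    (hcα : IsInterdense cα) (hcβ : IsInterdense cβ) :
    IsInterdense fun x : α ⊕ₗ β => Sum.elim cα cβ (ofLex x) := by
  rintro (x | x) (y | y) hxy i
  · obtain ⟨z, hxz, hzy, rfl⟩ := hcα x y (Sum.lex_inl_inl.1 hxy) i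
    exact ⟨toLex (.inl z), Sum.Lex.inl hxz, Sum.Lex.inl hzy, rfl⟩
  · obtain ⟨w, hxw⟩ := exists_gt x
    obtain ⟨z, hxz, -, rfl⟩ := hcα x w hxw i
    exact ⟨toLex (.inl z), Sum.Lex.inl hxz, Sum.Lex.sep _ _, rfl⟩
  · exact absurd hxy Sum.lex_inr_inl
  · obtain ⟨z, hxz, hzy, rfl⟩ := hcβ x y (Sum.lex_inr_inr.1 hxy) i
    exact ⟨toLex (.inr z), Sum.Lex.inr hxz, Sum.Lex.inr hzy, rfl⟩

namespace IsQn

variable {cα : α → Fin n} {cβ : β → Fin n}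

theorem exists_orderIso (hα : IsQn n α cα) (hβ : IsQn n β cβ) :
    ∃ e : α ≃o β, ∀ a, cβ (e a) = cα a := by
  obtain ⟨_, _, _, _, _, hcα⟩ := hα
  obtain ⟨_, _, _, _, _, hcβ⟩ := hβ
  exact exists_orderIso_of_isInterdense cα cβ hcα hcβ

theorem sumLex (hα : IsQn n α cα) (hβ : IsQn n β cβ) :
    IsQn n (α ⊕ₗ β) fun x => Sum.elim cα cβ (ofLex x) := by
  obtain ⟨_, _, _, _, _, hcα⟩ := hα
  obtain ⟨_, _, _, _, _, hcβ⟩ := hβ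
  exact ⟨inferInstanceAs (Countable (α ⊕ β)), inferInstanceAs (Nonempty (α ⊕ β)), inferInstance,
    inferInstance, inferInstance, IsInterdense.sumLex hcα hcβ⟩

end IsQn

namespace OrderIso

def sigmaLexCongrLeft {cα : α → γ} {cβ : β → γ} (e : α ≃o β)
    (he : ∀ a, cβ (e a) = cα a) (L : γ → Type*) [∀ i, LinearOrder (L i)] :
    (Σₗ a, L (cα a)) ≃o Σₗ b, L (cβ b) := by
  obtain rfl : (fun a => cβ (e a)) = cα := funext he
  refine StrictMono.orderIsoOfSurjective (Equiv.sigmaCongrLeft (β := fun b => L (cβ b)) e.toEquiv)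
    ?_ (Equiv.sigmaCongrLeft _).surjective
  rintro ⟨a, x⟩ ⟨a', x'⟩ (⟨_, _, h⟩ | ⟨_, _, h⟩)
  · exact Sigma.Lex.left _ _ (e.strictMono h)
  · exact Sigma.Lex.right _ _ h

def sigmaLexSumLex (L : α ⊕ₗ β → Type*) [∀ x, LinearOrder (L x)] :
    (Σₗ x, L x) ≃o (Σₗ a, L (toLex (.inl a))) ⊕ₗ (Σₗ b, L (toLex (.inr b))) := by
  refine StrictMono.orderIsoOfSurjective (Equiv.sumSigmaDistrib fun x => L (toLex x))
    ?_ (Equiv.sumSigmaDistrib _).surjective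
  rintro ⟨a | b, x⟩ ⟨a' | b', x'⟩ (⟨_, _, h⟩ | ⟨_, _, h⟩)
  · exact Sum.Lex.inl (Sigma.Lex.left _ _ (Sum.lex_inl_inl.1 h))
  · exact Sum.Lex.inl (Sigma.Lex.right _ _ h)
  · exact Sum.Lex.sep _ _
  · exact absurd h Sum.lex_inr_inl
  · exact Sum.Lex.inr (Sigma.Lex.left _ _ (Sum.lex_inr_inr.1 h))
  · exact Sum.Lex.inr (Sigma.Lex.right _ _ h)

end OrderIso

end

theorem shuffle_self_concat_general (n : ℕ) (Q : Type*) [LinearOrder Q] (c : Q → Fin n)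
    (hQ : IsQn n Q c) (L : Fin n → Type*) [∀ i, LinearOrder (L i)] :
    Nonempty ((Σₗ q : Q, L (c q)) ≃o ((Σₗ q : Q, L (c q)) ⊕ₗ (Σₗ q : Q, L (c q)))) := by
  obtain ⟨e, he⟩ := hQ.exists_orderIso (hQ.sumLex hQ)
  exact ⟨(OrderIso.sigmaLexCongrLeft (cβ := fun x : Q ⊕ₗ Q => Sum.elim c c (ofLex x)) e he L).trans
    (OrderIso.sigmaLexSumLex _)⟩

/-- The shuffle concatenated with itself is isomorphic to the shuffle:
ℚ_n(L₀,...,L_{n-1}) ≅ ℚ_n(L₀,...,L_{n-1}) ^ ℚ_n(L₀,...,L_{n-1}). -/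
theorem shuffle_self_concat (n : ℕ) (Q : Type*) [LinearOrder Q] (c : Q → Fin n)
    (hQ : IsQn n Q c) (L : Fin n → Type*) [∀ i, LinearOrder (L i)] [∀ i, Nonempty (L i)] :
    Nonempty ((Σₗ q : Q, L (c q)) ≃o ((Σₗ q : Q, L (c q)) ⊕ₗ (Σₗ q : Q, L (c q)))) :=
  shuffle_self_concat_general n Q c hQ L
end

section
/- For any m ≤ n, ℚ_{m+1}(L₀,...,L_{m-1}, ℚ_n(L₀,...,L_{n-1})) is order isomorphic to ℚ_n(L₀,...,L_{n-1}): shuffling the first m of the L_i together with the full shuffle ℚ_n(L₀,...,L_{n-1}) as an extra argument recovers the original shuffle. -/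
namespace OrderIso

variable {ι ι' : Type*} [LinearOrder ι] [LinearOrder ι']

noncomputable def sigmaLexCongr {F : ι → Type*} {G : ι' → Type*} [∀ i, LinearOrder (F i)]
    [∀ i', LinearOrder (G i')] (e : ι ≃o ι') (g : ∀ i, F i ≃o G (e i)) :
    (Σₗ i, F i) ≃o Σₗ i', G i' :=
  StrictMono.orderIsoOfSurjective (fun p ↦ toLex ⟨e (ofLex p).1, g _ (ofLex p).2⟩)
    (by
      rintro ⟨i, x⟩ ⟨j, y⟩ (⟨x, y, h⟩ | ⟨x, y, h⟩)
      · exact Sigma.Lex.left _ _ (e.strictMono h)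
      · exact Sigma.Lex.right _ _ ((g i).strictMono h))
    (by
      rintro ⟨j, y⟩
      obtain ⟨i, rfl⟩ := e.surjective j
      exact ⟨toLex ⟨i, (g i).symm y⟩,
        congrArg (fun z ↦ toLex (⟨e i, z⟩ : Σ i', G i')) ((g i).apply_symm_apply y)⟩)

noncomputable def sigmaLexAssoc (F : ι → Type*) [∀ i, LinearOrder (F i)] (G : ∀ i, F i → Type*)
    [∀ i x, LinearOrder (G i x)] :
    (Σₗ i, Σₗ x : F i, G i x) ≃o Σₗ p : (Σₗ i, F i), G (ofLex p).1 (ofLex p).2 :=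
  StrictMono.orderIsoOfSurjective
    (fun p ↦ toLex ⟨toLex ⟨(ofLex p).1, (ofLex (ofLex p).2).1⟩, (ofLex (ofLex p).2).2⟩)
    (by
      rintro ⟨i, x, a⟩ ⟨j, y, b⟩ (⟨_, _, h⟩ | ⟨_, _, ⟨_, _, h⟩ | ⟨_, _, h⟩⟩)
      · exact Sigma.Lex.left _ _ (Sigma.Lex.left _ _ h)
      · exact Sigma.Lex.left _ _ (Sigma.Lex.right _ _ h)
      · exact Sigma.Lex.right _ _ h)
    (fun ⟨⟨i, x⟩, a⟩ ↦ ⟨toLex ⟨i, toLex ⟨x, a⟩⟩, rfl⟩)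

noncomputable def sigmaLexOfSubsingleton [Subsingleton ι] (F : ι → Type*)
    [∀ i, LinearOrder (F i)] (i : ι) : F i ≃o Σₗ i, F i :=
  StrictMono.orderIsoOfSurjective (fun x ↦ toLex ⟨i, x⟩) (fun _ _ h ↦ Sigma.Lex.right _ _ h)
    (by
      rintro ⟨j, y⟩
      obtain rfl := Subsingleton.elim i j
      exact ⟨y, rfl⟩)

theorem nonempty_sigmaLex_of_comp_eq {κ : Type*} (F : κ → Type*) [∀ k, LinearOrder (F k)]
    {a : ι → κ} {b : ι' → κ} (e : ι ≃o ι') (h : ∀ i, b (e i) = a i) :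
    Nonempty ((Σₗ i, F (a i)) ≃o Σₗ i', F (b i')) := by
  obtain rfl : a = b ∘ e := funext fun i ↦ (h i).symm
  exact ⟨sigmaLexCongr e fun _ ↦ refl _⟩

end OrderIso

section BackAndForth

variable {n : ℕ} {α β : Type*} [LinearOrder α] [LinearOrder β] {cα : α → Fin n} {cβ : β → Fin n}

theorem IsQn.surjective (hα : IsQn n α cα) : Function.Surjective cα := by
  obtain ⟨-, ⟨a⟩, -, -, _, hint⟩ := hα
  intro i
  obtain ⟨b, hab⟩ := exists_gt a
  obtain ⟨z, -, -, hz⟩ := hint a b hab i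
  exact ⟨z, hz⟩

theorem IsQn.exists_between_finsets (hβ : IsQn n β cβ) (lo hi : Finset β)
    (lo_lt_hi : ∀ x ∈ lo, ∀ y ∈ hi, x < y) (i : Fin n) :
    ∃ b, cβ b = i ∧ (∀ x ∈ lo, x < b) ∧ ∀ y ∈ hi, b < y := by
  obtain ⟨-, _, _, _, _, hint⟩ := hβ
  obtain ⟨b₁, hlo₁, hhi₁⟩ := Order.exists_between_finsets lo hi lo_lt_hi
  obtain ⟨b₀, hlo₀, hb₀₁⟩ := Order.exists_between_finsets lo {b₁} (by simpa using hlo₁)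
  obtain ⟨b, hb₀, hb₁, hb⟩ := hint b₀ b₁ (by simpa using hb₀₁) i
  exact ⟨b, hb, fun x hx ↦ (hlo₀ x hx).trans hb₀, fun y hy ↦ hb₁.trans (hhi₁ y hy)⟩

theorem IsQn.exists_across (hβ : IsQn n β cβ) {s : Finset (α × β)}
    (hs : ∀ p ∈ s, ∀ q ∈ s, cmp p.1 q.1 = cmp p.2 q.2) (hcol : ∀ p ∈ s, cβ p.2 = cα p.1) (a : α) :
    ∃ b, cβ b = cα a ∧ ∀ p ∈ s, cmp p.1 a = cmp p.2 b := by
  by_cases hdom : ∃ b, (a, b) ∈ s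
  · obtain ⟨b, hb⟩ := hdom
    exact ⟨b, hcol _ hb, fun p hp ↦ hs p hp _ hb⟩
  rw [not_exists] at hdom
  have lo_lt_hi : ∀ x ∈ {p ∈ s | p.1 < a}.image Prod.snd,
      ∀ y ∈ {p ∈ s | a < p.1}.image Prod.snd, x < y := by
    simp only [Finset.mem_image, Finset.mem_filter]
    rintro _ ⟨p, ⟨hp, hpa⟩, rfl⟩ _ ⟨q, ⟨hq, haq⟩, rfl⟩
    exact (lt_iff_lt_of_cmp_eq_cmp (hs p hp q hq)).1 (hpa.trans haq)
  obtain ⟨b, hb, hlo, hhi⟩ := hβ.exists_between_finsets _ _ lo_lt_hi (cα a)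
  refine ⟨b, hb, fun p hp ↦ ?_⟩
  rcases lt_or_gt_of_ne (fun h : p.1 = a ↦ hdom p.2 (h ▸ hp)) with hpa | hap
  · have hpb := hlo p.2 (Finset.mem_image_of_mem _ (Finset.mem_filter.2 ⟨hp, hpa⟩))
    rw [(cmp_eq_lt_iff _ _).2 hpa, (cmp_eq_lt_iff _ _).2 hpb]
  · have hbp := hhi p.2 (Finset.mem_image_of_mem _ (Finset.mem_filter.2 ⟨hp, hap⟩))
    rw [(cmp_eq_gt_iff _ _).2 hap, (cmp_eq_gt_iff _ _).2 hbp]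

theorem IsQn.exists_across_swap (hα : IsQn n α cα) {s : Finset (α × β)}
    (hs : ∀ p ∈ s, ∀ q ∈ s, cmp p.1 q.1 = cmp p.2 q.2) (hcol : ∀ p ∈ s, cβ p.2 = cα p.1) (b : β) :
    ∃ a, cα a = cβ b ∧ ∀ p ∈ s, cmp p.1 a = cmp p.2 b := by
  obtain ⟨a, ha, hcmp⟩ := hα.exists_across (s := s.image Prod.swap)
    (Finset.forall_mem_image.2 fun p hp ↦ Finset.forall_mem_image.2 fun q hq ↦ (hs p hp q hq).symm)
    (Finset.forall_mem_image.2 fun p hp ↦ (hcol p hp).symm) b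
  exact ⟨a, ha, fun p hp ↦ (hcmp p.swap (Finset.mem_image_of_mem _ hp)).symm⟩

variable (cα cβ) in
def ColoredPartialIso : Type _ :=
  { s : Finset (α × β) //
    (∀ p ∈ s, ∀ q ∈ s, cmp p.1 q.1 = cmp p.2 q.2) ∧ ∀ p ∈ s, cβ p.2 = cα p.1 }

namespace ColoredPartialIso

instance : Preorder (ColoredPartialIso cα cβ) := Subtype.preorder _

instance : Inhabited (ColoredPartialIso cα cβ) :=
  ⟨⟨∅, by simp, by simp⟩⟩

def insert (f : ColoredPartialIso cα cβ) {a : α} {b : β} (hcol : cβ b = cα a)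
    (hcmp : ∀ p ∈ f.1, cmp p.1 a = cmp p.2 b) : ColoredPartialIso cα cβ :=
  ⟨Insert.insert (a, b) f.1, by
    simp only [Finset.mem_insert, forall_eq_or_imp, cmp_self_eq_eq, true_and]
    exact ⟨fun q hq ↦ by rw [cmp_eq_cmp_symm]; exact hcmp q hq,
      fun p hp ↦ ⟨hcmp p hp, fun q hq ↦ f.2.1 p hp q hq⟩⟩, by
    simpa only [Finset.mem_insert, forall_eq_or_imp] using ⟨hcol, f.2.2⟩⟩

theorem le_insert (f : ColoredPartialIso cα cβ) {a : α} {b : β} (hcol : cβ b = cα a)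
    (hcmp : ∀ p ∈ f.1, cmp p.1 a = cmp p.2 b) : f ≤ f.insert hcol hcmp :=
  Finset.subset_insert _ _

def definedAtLeft (hβ : IsQn n β cβ) (a : α) : Order.Cofinal (ColoredPartialIso cα cβ) where
  carrier := {f | ∃ b, (a, b) ∈ f.1}
  isCofinal f := by
    obtain ⟨b, hcol, hcmp⟩ := hβ.exists_across f.2.1 f.2.2 a
    exact ⟨f.insert hcol hcmp, ⟨b, Finset.mem_insert_self _ _⟩, f.le_insert hcol hcmp⟩

def definedAtRight (hα : IsQn n α cα) (b : β) : Order.Cofinal (ColoredPartialIso cα cβ) where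
  carrier := {f | ∃ a, (a, b) ∈ f.1}
  isCofinal f := by
    obtain ⟨a, hcol, hcmp⟩ := hα.exists_across_swap f.2.1 f.2.2 b
    exact ⟨f.insert hcol.symm hcmp, ⟨a, Finset.mem_insert_self _ _⟩, f.le_insert _ hcmp⟩

end ColoredPartialIso

open ColoredPartialIso in
theorem IsQn.exists_orderIso_s6 (hα : IsQn n α cα) (hβ : IsQn n β cβ) :
    ∃ e : α ≃o β, ∀ a, cβ (e a) = cα a := by
  have := hα.1
  have := hβ.1
  cases nonempty_encodable α
  cases nonempty_encodable β
  let cofinals : α ⊕ β → Order.Cofinal (ColoredPartialIso cα cβ) :=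
    Sum.elim (definedAtLeft hβ) (definedAtRight hα)
  let I := Order.idealOfCofinals default cofinals
  have hF (a : α) : ∃ b, ∃ f ∈ I, (a, b) ∈ f.1 := by
    obtain ⟨f, ⟨b, hb⟩, hf⟩ := Order.cofinal_meets_idealOfCofinals default cofinals (Sum.inl a)
    exact ⟨b, f, hf, hb⟩
  have hG (b : β) : ∃ a, ∃ f ∈ I, (a, b) ∈ f.1 := by
    obtain ⟨f, ⟨a, ha⟩, hf⟩ := Order.cofinal_meets_idealOfCofinals default cofinals (Sum.inr b)
    exact ⟨a, f, hf, ha⟩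
  choose F hF using hF
  choose G hG using hG
  refine ⟨OrderIso.ofCmpEqCmp F G fun a b ↦ ?_, fun a ↦ ?_⟩
  · obtain ⟨f, hf, ha⟩ := hF a
    obtain ⟨g, hg, hb⟩ := hG b
    obtain ⟨h, -, hfh, hgh⟩ := I.directed _ hf _ hg
    exact h.2.1 _ (hfh ha) _ (hgh hb)
  · obtain ⟨f, -, ha⟩ := hF a
    exact f.2.2 _ ha

end BackAndForth

theorem IsQn.sigmaLex {k n : ℕ} {Q' : Type*} [LinearOrder Q'] {c' : Q' → Fin k}
    (hQ' : IsQn k Q' c') {K : Fin k → Type*} [∀ j, LinearOrder (K j)] [∀ j, Countable (K j)]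
    [∀ j, Nonempty (K j)] {d : ∀ j, K j → Fin n}
    (hd : ∀ j (x y : K j), x < y → ∀ i, ∃ z, x < z ∧ z < y ∧ d j z = i)
    {j₀ : Fin k} (hj₀ : Function.Surjective (d j₀)) :
    IsQn n (Σₗ q', K (c' q')) fun p ↦ d _ (ofLex p).2 := by
  obtain ⟨_, ⟨q₀⟩, -, _, _, hint'⟩ := hQ'
  have hint (x y : Σₗ q', K (c' q')) (hxy : x < y) (i : Fin n) :
      ∃ z, x < z ∧ z < y ∧ d _ (ofLex z).2 = i := by
    rcases hxy with @⟨_, _, x, y, hq⟩ | @⟨q, x, y, hxy⟩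
    · obtain ⟨q, hxq, hqy, rfl⟩ := hint' _ _ hq j₀
      obtain ⟨z, hz⟩ := hj₀ i
      exact ⟨toLex ⟨q, z⟩, Sigma.Lex.left _ _ hxq, Sigma.Lex.left _ _ hqy, hz⟩
    · obtain ⟨z, hxz, hzy, hz⟩ := hd _ x y hxy i
      exact ⟨toLex ⟨q, z⟩, Sigma.Lex.right _ _ hxz, Sigma.Lex.right _ _ hzy, hz⟩
  refine ⟨inferInstanceAs (Countable (Σ q', K (c' q'))), ⟨toLex ⟨q₀, Classical.arbitrary _⟩⟩,
    ⟨fun x y hxy ↦ ?_⟩, inferInstance, inferInstance, hint⟩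
  obtain ⟨z, hxz, hzy, -⟩ := hint x y hxy (d j₀ (Classical.arbitrary _))
  exact ⟨z, hxz, hzy⟩

section NestedShuffle

variable {n m : ℕ} {Q : Type*}

/-- The `j`-th argument of the outer shuffle as a coloured order: for `j < m` the single point `⊥`,
coloured `j`, and for `j = m` the copy `WithBot.some '' Q` of `Q`. -/
abbrev NestedFibre (m : ℕ) (Q : Type*) (j : Fin (m + 1)) : Type _ :=
  {w : WithBot Q // w = ⊥ ↔ (j : ℕ) < m}

namespace NestedFibre

variable {j : Fin (m + 1)}

def color (hmn : m ≤ n) (c : Q → Fin n) : NestedFibre m Q j → Fin n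
  | ⟨⊥, h⟩ => Fin.castLE hmn ⟨j, h.1 rfl⟩
  | ⟨(q : Q), _⟩ => c q

def bot (h : (j : ℕ) < m) : NestedFibre m Q j := ⟨⊥, iff_of_true rfl h⟩

theorem subsingleton (h : (j : ℕ) < m) : Subsingleton (NestedFibre m Q j) :=
  ⟨fun x y ↦ Subtype.ext ((x.2.2 h).trans (y.2.2 h).symm)⟩

variable [LinearOrder Q]

noncomputable def coeIso (h : ¬(j : ℕ) < m) : Q ≃o NestedFibre m Q j :=
  StrictMono.orderIsoOfSurjective (fun q ↦ ⟨q, iff_of_false WithBot.coe_ne_bot h⟩)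
    (fun _ _ hab ↦ WithBot.coe_lt_coe.2 hab)
    (fun ⟨w, hw⟩ ↦ by
      obtain ⟨q, rfl⟩ := WithBot.ne_bot_iff_exists.1 (mt hw.1 h)
      exact ⟨q, rfl⟩)

variable (hmn : m ≤ n) {c : Q → Fin n}

theorem color_coeIso (h : ¬(j : ℕ) < m) (q : Q) : (coeIso h q).color hmn c = c q := rfl

theorem exists_between_color (hQ : IsQn n Q c) (x y : NestedFibre m Q j) (hxy : x < y)
    (i : Fin n) : ∃ z, x < z ∧ z < y ∧ z.color hmn c = i := by
  by_cases h : (j : ℕ) < m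
  · exact absurd hxy (((subsingleton h).elim x y).symm ▸ lt_irrefl x)
  obtain ⟨a, rfl⟩ := (coeIso h).surjective x
  obtain ⟨b, rfl⟩ := (coeIso h).surjective y
  obtain ⟨-, -, -, -, -, hint⟩ := hQ
  obtain ⟨z, haz, hzb, hz⟩ := hint a b ((coeIso h).lt_iff_lt.1 hxy) i
  exact ⟨coeIso h z, (coeIso h).lt_iff_lt.2 haz, (coeIso h).lt_iff_lt.2 hzb, hz⟩

end NestedFibre

theorem isQn_nestedShuffle [LinearOrder Q] (hmn : m ≤ n) {Q' : Type*} [LinearOrder Q']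
    {c : Q → Fin n} {c' : Q' → Fin (m + 1)} (hQ : IsQn n Q c) (hQ' : IsQn (m + 1) Q' c') :
    IsQn n (Σₗ q', NestedFibre m Q (c' q')) fun p ↦ (ofLex p).2.color hmn c := by
  have := hQ.1
  obtain ⟨q₀⟩ := hQ.2.1
  have (j : Fin (m + 1)) : Nonempty (NestedFibre m Q j) := by
    by_cases h : (j : ℕ) < m
    exacts [⟨.bot h⟩, ⟨.coeIso h q₀⟩]
  have hlast : ¬((Fin.last m : Fin (m + 1)) : ℕ) < m := by simp
  refine hQ'.sigmaLex (K := NestedFibre m Q) (fun _ ↦ NestedFibre.exists_between_color hmn hQ)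
    (j₀ := Fin.last m) fun i ↦ ?_
  obtain ⟨q, hq⟩ := hQ.surjective i
  exact ⟨NestedFibre.coeIso hlast q, hq⟩

end NestedShuffle

theorem shuffle_nested_general (n m : ℕ) (hmn : m ≤ n) (Q Q' : Type*) [LinearOrder Q]
    [LinearOrder Q'] (c : Q → Fin n) (c' : Q' → Fin (m + 1))
    (hQ : IsQn n Q c) (hQ' : IsQn (m + 1) Q' c')
    (L : Fin n → Type*) [∀ i, LinearOrder (L i)]
    (M : Fin (m + 1) → Type*) [∀ j, LinearOrder (M j)]
    (hMlow : ∀ j : Fin (m + 1), ∀ h : (j : ℕ) < m,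
      Nonempty (M j ≃o L (Fin.castLE hmn ⟨j, h⟩)))
    (hMtop : ∀ j : Fin (m + 1), (j : ℕ) = m →
      Nonempty (M j ≃o (Σₗ q : Q, L (c q)))) :
    Nonempty ((Σₗ q' : Q', M (c' q')) ≃o (Σₗ q : Q, L (c q))) := by
  have hfibre (j : Fin (m + 1)) :
      Nonempty (M j ≃o Σₗ w : NestedFibre m Q j, L (w.color hmn c)) := by
    by_cases h : (j : ℕ) < m
    · have := NestedFibre.subsingleton (Q := Q) h
      obtain ⟨eM⟩ := hMlow j h
      exact ⟨eM.trans (OrderIso.sigmaLexOfSubsingleton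
        (fun w : NestedFibre m Q j ↦ L (w.color hmn c)) (NestedFibre.bot h))⟩
    · obtain ⟨eM⟩ := hMtop j (by omega)
      obtain ⟨eQ⟩ := OrderIso.nonempty_sigmaLex_of_comp_eq L (a := c) (NestedFibre.coeIso h)
        (NestedFibre.color_coeIso hmn h)
      exact ⟨eM.trans eQ⟩
  obtain ⟨e, he⟩ := (isQn_nestedShuffle hmn hQ hQ').exists_orderIso_s6 hQ
  obtain ⟨eL⟩ := OrderIso.nonempty_sigmaLex_of_comp_eq L e he
  exact ⟨(OrderIso.sigmaLexCongr (.refl Q') fun q' ↦ (hfibre (c' q')).some).trans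
    ((OrderIso.sigmaLexAssoc (fun q' ↦ NestedFibre m Q (c' q'))
      fun _ w ↦ L (w.color hmn c)).trans eL)⟩

/-- ℚ_{m+1}(L₀,...,L_{m-1}, ℚ_n(L₀,...,L_{n-1})) ≅ ℚ_n(L₀,...,L_{n-1}): shuffling the
first m of the L_i together with the full shuffle as an extra argument recovers the
original shuffle.  Here M : Fin (m+1) → Type is the family of arguments of the outer
shuffle, specified up to order isomorphism. -/
theorem shuffle_nested (n m : ℕ) (hmn : m ≤ n) (Q Q' : Type*) [LinearOrder Q]
    [LinearOrder Q'] (c : Q → Fin n) (c' : Q' → Fin (m + 1))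
    (hQ : IsQn n Q c) (hQ' : IsQn (m + 1) Q' c')
    (L : Fin n → Type*) [∀ i, LinearOrder (L i)] [∀ i, Nonempty (L i)]
    (M : Fin (m + 1) → Type*) [∀ j, LinearOrder (M j)]
    (hMlow : ∀ j : Fin (m + 1), ∀ h : (j : ℕ) < m,
      Nonempty (M j ≃o L (Fin.castLE hmn ⟨j, h⟩)))
    (hMtop : ∀ j : Fin (m + 1), (j : ℕ) = m →
      Nonempty (M j ≃o (Σₗ q : Q, L (c q)))) :
    Nonempty ((Σₗ q' : Q', M (c' q')) ≃o (Σₗ q : Q, L (c q))) :=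
  shuffle_nested_general n m hmn Q Q' c c' hQ hQ' L M hMlow hMtop
end

section
/- Shuffles of finite orders are determined by the multiset of sizes up to duplicates: ℚ_n(t₀,...,t_{n-1}) ≅ ℚ_m(s₀,...,s_{m-1}) for finite nonempty linear orders t_i, s_j if and only if {|t₀|,...,|t_{n-1}|} and {|s₀|,...,|s_{m-1}|} are equal as sets of natural numbers. -/
open Set

namespace Order

variable {α β κ : Type*} [LinearOrder α] [LinearOrder β]

def IsDenseColouring (d : α → κ) : Prop :=
  ∀ x y : α, x < y → ∀ k ∈ range d, ∃ z, x < z ∧ z < y ∧ d z = k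

theorem exists_between_finsets_of_isDenseColouring [DenselyOrdered β] [NoMinOrder β]
    [NoMaxOrder β] {d' : β → κ} (hd' : IsDenseColouring d') (lo hi : Finset β)
    (lo_lt_hi : ∀ x ∈ lo, ∀ y ∈ hi, x < y) {k : κ} (hk : k ∈ range d') :
    ∃ m, (∀ x ∈ lo, x < m) ∧ (∀ y ∈ hi, m < y) ∧ d' m = k := by
  have : Nonempty β := ⟨hk.choose⟩
  obtain ⟨m₁, lo_lt_m₁, m₁_lt_hi⟩ := exists_between_finsets lo hi lo_lt_hi
  obtain ⟨m₂, lo_lt_m₂, m₂_lt_hi⟩ := exists_between_finsets (insert m₁ lo) hi <| by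
    simpa only [Finset.forall_mem_insert] using ⟨m₁_lt_hi, lo_lt_hi⟩
  obtain ⟨m, m₁_lt_m, m_lt_m₂, rfl⟩ := hd' m₁ m₂ (lo_lt_m₂ m₁ (Finset.mem_insert_self _ _)) k hk
  exact ⟨m, fun x hx => (lo_lt_m₁ x hx).trans m₁_lt_m,
    fun y hy => m_lt_m₂.trans (m₂_lt_hi y hy), rfl⟩

namespace PartialIso

def insert (f : PartialIso α β) (a : α) (b : β)
    (hab : ∀ p ∈ f.val, cmp p.1 a = cmp p.2 b) : PartialIso α β :=
  ⟨Insert.insert (a, b) f.val, by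
    intro p hp q hq
    rw [Finset.mem_insert] at hp hq
    rcases hp with rfl | hp <;> rcases hq with rfl | hq
    · simp only [cmp_self_eq_eq]
    · rw [cmp_eq_cmp_symm]
      exact hab _ hq
    · exact hab _ hp
    · exact f.prop _ hp _ hq⟩

theorem mem_comm_iff {f : PartialIso α β} {p : β × α} : p ∈ f.comm.val ↔ p.swap ∈ f.val :=
  Finset.mem_image.trans ⟨fun ⟨_, hq, hqp⟩ => hqp ▸ hq, fun hp => ⟨p.swap, hp, rfl⟩⟩

end PartialIso

variable (d : α → κ) (d' : β → κ)

def ColouredPartialIso : Type _ :=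
  { f : PartialIso α β // ∀ p ∈ f.val, d p.1 = d' p.2 }

namespace ColouredPartialIso

noncomputable instance : Preorder (ColouredPartialIso d d') := Subtype.preorder _

instance : Inhabited (ColouredPartialIso d d') :=
  ⟨⟨default, fun _ hp => absurd hp (Finset.notMem_empty _)⟩⟩

variable {d d'}

protected def comm (f : ColouredPartialIso d d') : ColouredPartialIso d' d :=
  ⟨f.val.comm, fun _ hp => (f.prop _ (PartialIso.mem_comm_iff.mp hp)).symm⟩

theorem comm_comm (f : ColouredPartialIso d d') : f.comm.comm = f :=
  Subtype.ext <| Subtype.ext <| Finset.ext fun _ =>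
    PartialIso.mem_comm_iff.trans PartialIso.mem_comm_iff

theorem comm_mono : Monotone (ColouredPartialIso.comm (d := d) (d' := d')) :=
  fun _ _ hfg _ hp => PartialIso.mem_comm_iff.mpr (hfg (PartialIso.mem_comm_iff.mp hp))

theorem exists_across [DenselyOrdered β] [NoMinOrder β] [NoMaxOrder β]
    (hr : range d = range d') (hd' : IsDenseColouring d') (f : ColouredPartialIso d d') (a : α) :
    ∃ b, d' b = d a ∧ ∀ p ∈ f.val.val, cmp p.1 a = cmp p.2 b := by
  by_cases h : ∃ b, (a, b) ∈ f.val.val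
  · obtain ⟨b, hb⟩ := h
    exact ⟨b, (f.prop _ hb).symm, fun p hp => f.val.prop _ hp _ hb⟩
  have lo_lt_hi : ∀ x ∈ {p ∈ f.val.val | p.1 < a}.image Prod.snd,
      ∀ y ∈ {p ∈ f.val.val | a < p.1}.image Prod.snd, x < y := by
    simp only [Finset.mem_image, Finset.mem_filter]
    rintro _ ⟨p, ⟨hp, hpa⟩, rfl⟩ _ ⟨q, ⟨hq, haq⟩, rfl⟩
    rw [← lt_iff_lt_of_cmp_eq_cmp (f.val.prop _ hp _ hq)]
    exact hpa.trans haq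
  obtain ⟨b, lo_lt_b, b_lt_hi, hb⟩ :=
    exists_between_finsets_of_isDenseColouring hd' _ _ lo_lt_hi (hr ▸ mem_range_self a)
  refine ⟨b, hb, fun p hp => ?_⟩
  rcases lt_or_gt_of_ne (fun he : p.1 = a => h ⟨p.2, he ▸ hp⟩) with hpa | hap
  · have hpb := lo_lt_b _ (Finset.mem_image_of_mem _ (Finset.mem_filter.mpr ⟨hp, hpa⟩))
    rw [(cmp_eq_lt_iff _ _).mpr hpa, (cmp_eq_lt_iff _ _).mpr hpb]
  · have hbp := b_lt_hi _ (Finset.mem_image_of_mem _ (Finset.mem_filter.mpr ⟨hp, hap⟩))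
    rw [(cmp_eq_gt_iff _ _).mpr hap, (cmp_eq_gt_iff _ _).mpr hbp]

variable (d d')

def definedAtLeft [DenselyOrdered β] [NoMinOrder β] [NoMaxOrder β]
    (hr : range d = range d') (hd' : IsDenseColouring d') (a : α) :
    Cofinal (ColouredPartialIso d d') where
  carrier := {f | ∃ b, (a, b) ∈ f.val.val}
  isCofinal f := by
    obtain ⟨b, hb, hab⟩ := exists_across hr hd' f a
    refine ⟨⟨f.val.insert a b hab, ?_⟩, ⟨b, Finset.mem_insert_self _ _⟩,
      Finset.subset_insert _ _⟩
    intro p hp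
    rcases Finset.mem_insert.mp hp with rfl | hp
    exacts [hb.symm, f.prop p hp]

def definedAtRight [DenselyOrdered α] [NoMinOrder α] [NoMaxOrder α]
    (hr : range d = range d') (hd : IsDenseColouring d) (b : β) :
    Cofinal (ColouredPartialIso d d') where
  carrier := {f | ∃ a, (a, b) ∈ f.val.val}
  isCofinal f := by
    obtain ⟨g, ⟨a, hba⟩, hfg⟩ := (definedAtLeft d' d hr.symm hd b).isCofinal f.comm
    exact ⟨g.comm, ⟨a, PartialIso.mem_comm_iff.mpr hba⟩, f.comm_comm ▸ comm_mono hfg⟩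

end ColouredPartialIso

open ColouredPartialIso in
theorem exists_orderIso_of_isDenseColouring [Countable α] [DenselyOrdered α] [NoMinOrder α]
    [NoMaxOrder α] [Countable β] [DenselyOrdered β] [NoMinOrder β] [NoMaxOrder β]
    (hr : range d = range d') (hd : IsDenseColouring d) (hd' : IsDenseColouring d') :
    ∃ f : α ≃o β, ∀ a, d' (f a) = d a := by
  cases nonempty_encodable α
  cases nonempty_encodable β
  let D : α ⊕ β → Cofinal (ColouredPartialIso d d') :=
    Sum.elim (definedAtLeft d d' hr hd') (definedAtRight d d' hr hd)
  let I := idealOfCofinals default D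
  have forth (a : α) : ∃ f ∈ I, ∃ b, (a, b) ∈ f.val.val := by
    obtain ⟨f, hf, hfI⟩ := cofinal_meets_idealOfCofinals default D (Sum.inl a)
    exact ⟨f, hfI, hf⟩
  have back (b : β) : ∃ f ∈ I, ∃ a, (a, b) ∈ f.val.val := by
    obtain ⟨f, hf, hfI⟩ := cofinal_meets_idealOfCofinals default D (Sum.inr b)
    exact ⟨f, hfI, hf⟩
  choose fF hfF F hF using forth
  choose fG hfG G hG using back
  refine ⟨OrderIso.ofCmpEqCmp F G fun a b => ?_, fun a => ((fF a).prop _ (hF a)).symm⟩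
  obtain ⟨h, -, hFh, hGh⟩ := I.directed _ (hfF a) _ (hfG b)
  exact h.val.prop (a, _) (hFh (hF a)) (_, b) (hGh (hG b))

end Order

namespace Sigma.Lex

variable {ι ι' : Type*} {α : ι → Type*} {β : ι' → Type*}

theorem mem_range_toLex_mk {i : ι} {z : Σₗ i, α i} :
    z ∈ range (fun a : α i => toLex (⟨i, a⟩ : Σ i, α i)) ↔ z.1 = i := by
  constructor
  · rintro ⟨a, rfl⟩
    rfl
  · obtain ⟨j, a⟩ := z
    rintro rfl
    exact ⟨a, rfl⟩

theorem card_range_toLex_mk (i : ι) :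
    Nat.card (range (fun a : α i => toLex (⟨i, a⟩ : Σ i, α i))) = Nat.card (α i) :=
  Nat.card_range_of_injective (toLex.injective.comp sigma_mk_injective)

variable [LinearOrder ι] [LinearOrder ι'] [∀ i, LinearOrder (α i)] [∀ j, LinearOrder (β j)]

theorem monotone_fst : Monotone fun x : Σₗ i, α i => x.1 := by
  intro x y h
  rcases le_def.mp h with h | ⟨h, -⟩
  exacts [h.le, h.le]

noncomputable def _root_.OrderIso.sigmaLexCongr_s16 (f : ι ≃o ι') (F : ∀ i, α i ≃o β (f i)) :
    (Σₗ i, α i) ≃o Σₗ j, β j :=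
  StrictMono.orderIsoOfSurjective
    (fun x => toLex (Equiv.sigmaCongr f.toEquiv (fun i => (F i).toEquiv) (ofLex x)))
    (by
      rintro ⟨i, a⟩ ⟨j, b⟩ h
      refine lt_def.mpr ?_
      rcases lt_def.mp h with h | ⟨hij, h⟩
      · exact Or.inl (f.strictMono h)
      · dsimp only at hij h
        subst hij
        exact Or.inr ⟨rfl, (F i).strictMono h⟩)
    ((toLex.surjective.comp (Equiv.surjective _)).comp ofLex.surjective)

variable [∀ i, Finite (α i)]

theorem fst_eq_iff_finite_Icc [DenselyOrdered ι] [∀ i, Nonempty (α i)] {x y : Σₗ i, α i}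
    (hxy : x ≤ y) : x.1 = y.1 ↔ (Icc x y).Finite := by
  constructor
  · intro h
    refine (finite_range fun a : α x.1 => toLex (⟨x.1, a⟩ : Σ i, α i)).subset fun z hz => ?_
    rw [mem_range_toLex_mk]
    exact le_antisymm (h ▸ monotone_fst hz.2) (monotone_fst hz.1)
  · intro hfin
    by_contra hne
    have : Infinite (Ioo x.1 y.1) := (Ioo_infinite ((monotone_fst hxy).lt_of_ne hne)).to_subtype
    refine infinite_of_injective_forall_mem (α := Ioo x.1 y.1)
      (f := fun i => toLex (⟨i, Classical.arbitrary _⟩ : Σ i, α i)) ?_ ?_ hfin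
    · exact fun i j h => Subtype.ext (congrArg Sigma.fst h)
    · exact fun i => ⟨(lt_def.mpr (Or.inl i.2.1)).le, (lt_def.mpr (Or.inl i.2.2)).le⟩

theorem fst_eq_iff_finite_uIcc [DenselyOrdered ι] [∀ i, Nonempty (α i)] {x y : Σₗ i, α i} :
    x.1 = y.1 ↔ (uIcc x y).Finite := by
  rcases le_total x y with h | h
  · rw [uIcc_of_le h, fst_eq_iff_finite_Icc h]
  · rw [uIcc_of_ge h, eq_comm, fst_eq_iff_finite_Icc h]

variable [DenselyOrdered ι] [DenselyOrdered ι'] [∀ i, Nonempty (α i)]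
  [∀ j, Finite (β j)] [∀ j, Nonempty (β j)]

theorem fst_eq_fst_iff_of_orderIso (e : (Σₗ i, α i) ≃o Σₗ j, β j) {x y : Σₗ i, α i} :
    (e x).1 = (e y).1 ↔ x.1 = y.1 := by
  rw [fst_eq_iff_finite_uIcc, fst_eq_iff_finite_uIcc,
    ← OrderEmbedding.preimage_uIcc e.toOrderEmbedding, OrderIso.coe_toOrderEmbedding]
  exact ⟨(·.preimage e.injective.injOn), (·.of_preimage e.surjective)⟩

theorem card_fiber_eq_of_orderIso (e : (Σₗ i, α i) ≃o Σₗ j, β j) (x : Σₗ i, α i) :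
    Nat.card (α x.1) = Nat.card (β (e x).1) := by
  have fiber_image : e '' range (fun a : α x.1 => toLex (⟨x.1, a⟩ : Σ i, α i)) =
      range fun b : β (e x).1 => toLex (⟨(e x).1, b⟩ : Σ j, β j) := by
    ext z
    rw [e.image_eq_preimage_symm, mem_preimage, mem_range_toLex_mk, mem_range_toLex_mk,
      ← fst_eq_fst_iff_of_orderIso e, OrderIso.apply_symm_apply]
  calc Nat.card (α x.1)
      _ = Nat.card (range fun a : α x.1 => toLex (⟨x.1, a⟩ : Σ i, α i)) :=
        (card_range_toLex_mk _).symm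
      _ = Nat.card (e '' range fun a : α x.1 => toLex (⟨x.1, a⟩ : Σ i, α i)) :=
        (Nat.card_image_of_injective e.injective _).symm
      _ = Nat.card (β (e x).1) := by rw [fiber_image, card_range_toLex_mk]

theorem range_card_subset_of_orderIso (e : (Σₗ i, α i) ≃o Σₗ j, β j) :
    range (fun i => Nat.card (α i)) ⊆ range fun j => Nat.card (β j) := by
  rintro _ ⟨i, rfl⟩
  exact ⟨_, (card_fiber_eq_of_orderIso e (toLex ⟨i, Classical.arbitrary _⟩)).symm⟩

end Sigma.Lex

theorem nonempty_orderIso_of_natCard_eq {α β : Type*} [LinearOrder α] [LinearOrder β] [Finite α]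
    [Finite β] (h : Nat.card α = Nat.card β) : Nonempty (α ≃o β) := by
  have := Fintype.ofFinite α
  have := Fintype.ofFinite β
  rw [Nat.card_eq_fintype_card, Nat.card_eq_fintype_card] at h
  exact ⟨(Fintype.orderIsoFinOfCardEq α h).symm.trans (Fintype.orderIsoFinOfCardEq β rfl)⟩

namespace IsQn

variable {n : ℕ} {Q : Type*} [LinearOrder Q] {c : Q → Fin n}

theorem surjective_s16 (hQ : IsQn n Q c) : Function.Surjective c := by
  obtain ⟨-, ⟨x⟩, -, -, hQmax, hc⟩ := hQ
  obtain ⟨y, hxy⟩ := hQmax.exists_gt x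
  intro i
  obtain ⟨z, -, -, hz⟩ := hc x y hxy i
  exact ⟨z, hz⟩

theorem isDenseColouring_comp {κ : Type*} (hQ : IsQn n Q c) (g : Fin n → κ) :
    Order.IsDenseColouring (g ∘ c) := by
  obtain ⟨-, -, -, -, -, hc⟩ := hQ
  rintro x y hxy _ ⟨q, rfl⟩
  obtain ⟨z, hxz, hzy, hz⟩ := hc x y hxy (c q)
  exact ⟨z, hxz, hzy, congrArg g hz⟩

end IsQn

/-- Shuffles of finite nonempty orders are determined by the set of sizes:
ℚ_n(t₀,...,t_{n-1}) ≅ ℚ_m(s₀,...,s_{m-1}) iff the sets of cardinalities of the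
t_i and of the s_j coincide. -/
theorem shuffle_iso_iff_sizes (n m : ℕ) (Q Q' : Type*) [LinearOrder Q]
    [LinearOrder Q'] (c : Q → Fin n) (c' : Q' → Fin m)
    (hQ : IsQn n Q c) (hQ' : IsQn m Q' c')
    (t : Fin n → Type*) [∀ i, LinearOrder (t i)] [∀ i, Finite (t i)]
    [∀ i, Nonempty (t i)]
    (s : Fin m → Type*) [∀ j, LinearOrder (s j)] [∀ j, Finite (s j)]
    [∀ j, Nonempty (s j)] :
    Nonempty ((Σₗ q : Q, t (c q)) ≃o (Σₗ q' : Q', s (c' q'))) ↔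
      (Set.range fun i => Nat.card (t i)) = (Set.range fun j => Nat.card (s j)) := by
  obtain ⟨_, -, _, _, _, -⟩ := id hQ
  obtain ⟨_, -, _, _, _, -⟩ := id hQ'
  have range_t := hQ.surjective_s16.range_comp fun i => Nat.card (t i)
  have range_s := hQ'.surjective_s16.range_comp fun j => Nat.card (s j)
  constructor
  · rintro ⟨e⟩
    rw [← range_t, ← range_s]
    exact (Sigma.Lex.range_card_subset_of_orderIso e).antisymm
      (Sigma.Lex.range_card_subset_of_orderIso e.symm)
  · intro h
    obtain ⟨f, hf⟩ := Order.exists_orderIso_of_isDenseColouring _ _ (by rw [range_t, range_s, h])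
      (hQ.isDenseColouring_comp fun i => Nat.card (t i))
      (hQ'.isDenseColouring_comp fun j => Nat.card (s j))
    exact ⟨OrderIso.sigmaLexCongr_s16 f fun q => (nonempty_orderIso_of_natCard_eq (hf q).symm).some⟩
end
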